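/- arXiv:2312.08798 — 5 statements merged into one kernel-verified Lean document; each statement's English description precedes it below -/
import Mathlib

section
/- The query function of every sequential Thiele rule with s(2) - s(1) < s(1) is concurring: for every profile A with |A_i| ≤ 2 for all i ∈ N_A and |N_A(c)| = |N_A(d)| ≤ n/k for all c,d ∈ C, every sequence (c_1,…,c_ℓ) of distinct candidates, and all candidates c,d ∉ {c_1,…,c_ℓ} such that |{i ∈ N_A : A_i = {c_j,d}}| ≥ |{i ∈ N_A : A_i = {c_j,c}}| for all j ≤ ℓ with at least one inequality strict, it holds that ŝ(A,{c_1,…,c_ℓ,d}) < ŝ(A,{c_1,…,c_ℓ,c}); in particular d does not maximize ŝ(A,{c_1,…,c_ℓ,·}) and is not selected next. -/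
/-!
With ballots of size at most two, adding a candidate `x ∉ P` to a partial committee `P` gains
`s(1)` on every ballot approving `x` alone among `P ∪ {x}`, and only `s(2) - s(1)` on every ballot
`{y, x}` with `y ∈ P`. Hence the marginal gain of `x` is `|N_A(x)| s(1) - π(x) (2 s(1) - s(2))`,
where `π(x) = pairCount A P x` counts the ballots `{y, x}` with `y ∈ P`. When all approval scores
agree and `s(2) - s(1) < s(1)`, the candidate sharing more ballots with `P` therefore gains
strictly less.
-/

/-- An approval profile is a multiset of approval ballots (anonymous encoding):
each ballot is a nonempty subset of the candidates, and the electorate is nonempty. -/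
def validProfile {C : Type*} [DecidableEq C] (A : Multiset (Finset C)) : Prop :=
  A ≠ 0 ∧ ∀ b ∈ A, b ≠ (∅ : Finset C)

/-- Kelly's extension, weak preference. -/
def KellyWeak {C : Type*} [DecidableEq C] (b : Finset C) (X Y : Set (Finset C)) : Prop :=
  ∀ W ∈ X, ∀ W' ∈ Y, (W' ∩ b).card ≤ (W ∩ b).card

/-- Kelly's extension, strict preference. -/
def KellyStrict {C : Type*} [DecidableEq C] (b : Finset C) (X Y : Set (Finset C)) : Prop :=
  KellyWeak b X Y ∧ ∃ W ∈ X, ∃ W' ∈ Y, (W' ∩ b).card < (W ∩ b).card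

/-- The Thiele score `ŝ(A,W) = Σ_{i ∈ N_A} s(|A_i ∩ W|)` of a committee `W`. -/
def thieleScore {C : Type*} [DecidableEq C] (s : ℕ → ℚ) (A : Multiset (Finset C))
    (W : Finset C) : ℚ :=
  (A.map fun b => s (b ∩ W).card).sum

/-- `seqThieleValid s A P L`: the sequence `L` is a valid continuation of the partial
committee `P` for the sequential Thiele rule induced by `s`: each entry maximizes the
Thiele score of the extended partial committee. -/
def seqThieleValid {C : Type*} [DecidableEq C] (s : ℕ → ℚ) (A : Multiset (Finset C)) :
    Finset C → List C → Prop
  | _, [] => True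
  | P, c :: rest =>
      c ∉ P ∧
      (∀ x : C, x ∉ P → thieleScore s A (insert x P) ≤ thieleScore s A (insert c P)) ∧
      seqThieleValid s A (insert c P) rest

/-- The sequential Thiele rule induced by the scoring function `s`. -/
def seqThiele {C : Type*} [DecidableEq C] (s : ℕ → ℚ) (A : Multiset (Finset C))
    (k : ℕ) : Set (Finset C) :=
  {W | ∃ L : List C, L.toFinset = W ∧ L.length = k ∧ seqThieleValid s A ∅ L}

/-- The approval score `|N_A(c)|` of a candidate. -/
def appScore {C : Type*} [DecidableEq C] (A : Multiset (Finset C)) (c : C) : ℕ :=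
  Multiset.card (A.filter fun b => c ∈ b)

section

open Finset

variable {C : Type*} [DecidableEq C]

def pairCount (A : Multiset (Finset C)) (P : Finset C) (x : C) : ℕ :=
  ∑ y ∈ P, A.count {y, x}

section Ballot

variable {b P : Finset C} {x : C}

lemma card_inter_le_one_of_card_le_two (hb : #b ≤ 2) (hxb : x ∈ b) (hxP : x ∉ P) :
    #(b ∩ P) ≤ 1 := by
  have hsub : b ∩ P ⊆ b.erase x := fun y hy =>
    mem_erase.mpr ⟨fun hyx => hxP (hyx ▸ (mem_inter.mp hy).2), (mem_inter.mp hy).1⟩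
  have := card_le_card hsub
  rw [card_erase_of_mem hxb] at this
  omega

lemma filter_pair_eq_eq_inter (hb : #b ≤ 2) (hxb : x ∈ b) (hxP : x ∉ P) :
    {y ∈ P | {y, x} = b} = b ∩ P := by
  ext y
  simp only [mem_filter, mem_inter]
  constructor
  · rintro ⟨hyP, rfl⟩
    exact ⟨mem_insert_self _ _, hyP⟩
  · rintro ⟨hyb, hyP⟩
    have hyx : y ≠ x := fun h => hxP (h ▸ hyP)
    refine ⟨hyP, eq_of_subset_of_card_le ?_ ?_⟩
    · exact insert_subset hyb (singleton_subset_iff.mpr hxb)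
    · rw [card_pair hyx]
      exact hb

lemma appScore_cons (A : Multiset (Finset C)) :
    appScore (b ::ₘ A) x = appScore A x + if x ∈ b then 1 else 0 := by
  unfold appScore
  split_ifs with h <;> simp [h]

lemma pairCount_cons (A : Multiset (Finset C)) (hb : #b ≤ 2) (hxP : x ∉ P) :
    pairCount (b ::ₘ A) P x = pairCount A P x + if x ∈ b then #(b ∩ P) else 0 := by
  have hcount : ∀ y ∈ P,
      (b ::ₘ A).count {y, x} = A.count {y, x} + if {y, x} = b then 1 else 0 := fun y _ => Multiset.count_cons _ _ _
  rw [pairCount, pairCount, sum_congr rfl hcount, sum_add_distrib, sum_boole, Nat.cast_id]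
  split_ifs with hxb
  · rw [filter_pair_eq_eq_inter hb hxb hxP]
  · rw [filter_false_of_mem fun y _ hy => hxb (by rw [← hy]; simp)]
    rfl

lemma score_card_inter_insert (s : ℕ → ℚ) (h0 : s 0 = 0) (hb : #b ≤ 2) (hxP : x ∉ P) :
    s #(b ∩ insert x P) =
      s #(b ∩ P) + if x ∈ b then s 1 - #(b ∩ P) * (2 * s 1 - s 2) else 0 := by
  split_ifs with hxb
  · rw [inter_insert_of_mem hxb, card_insert_of_notMem fun h => hxP (mem_inter.mp h).2]
    have := card_inter_le_one_of_card_le_two hb hxb hxP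
    interval_cases #(b ∩ P)
    · simp [h0]
    · norm_num
      ring
  · rw [inter_insert_of_notMem hxb, add_zero]

end Ballot

lemma thieleScore_insert (s : ℕ → ℚ) (h0 : s 0 = 0) (A : Multiset (Finset C))
    (hsize : ∀ b ∈ A, #b ≤ 2) {P : Finset C} {x : C} (hxP : x ∉ P) :
    thieleScore s A (insert x P) =
      thieleScore s A P + appScore A x * s 1 - pairCount A P x * (2 * s 1 - s 2) := by
  induction A using Multiset.induction_on with
  | empty => simp [thieleScore, appScore, pairCount]
  | cons b A ih =>
    have hb := hsize b (Multiset.mem_cons_self b A)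
    have hA := ih fun b' hb' => hsize b' (Multiset.mem_cons_of_mem hb')
    simp only [thieleScore, Multiset.map_cons, Multiset.sum_cons] at hA ⊢
    rw [appScore_cons, pairCount_cons A hb hxP, score_card_inter_insert s h0 hb hxP]
    split_ifs <;> (push_cast; linear_combination hA)

lemma thieleScore_insert_lt_insert_of_pairCount_lt (s : ℕ → ℚ) (h0 : s 0 = 0)
    (hAV : s 2 - s 1 < s 1) (A : Multiset (Finset C)) (hsize : ∀ b ∈ A, #b ≤ 2)
    {P : Finset C} {c d : C} (hc : c ∉ P) (hd : d ∉ P) (happ : appScore A c = appScore A d)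
    (hpair : pairCount A P c < pairCount A P d) :
    thieleScore s A (insert d P) < thieleScore s A (insert c P) := by
  rw [thieleScore_insert s h0 A hsize hc, thieleScore_insert s h0 A hsize hd, happ]
  have hslope : 0 < 2 * s 1 - s 2 := by linarith
  have := mul_lt_mul_of_pos_right (Nat.cast_lt (α := ℚ).mpr hpair) hslope
  linarith

end

theorem seqThiele_concurring_general
    {C : Type*} [DecidableEq C]
    (s : ℕ → ℚ) (h0 : s 0 = 0)
    (hAV : s 2 - s 1 < s 1)
    (A : Multiset (Finset C))
    (hsize : ∀ b ∈ A, b.card ≤ 2)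
    (heq : ∀ c d : C, appScore A c = appScore A d)
    (L : List C)
    (c d : C) (hc : c ∉ L) (hd : d ∉ L)
    (hge : ∀ cj ∈ L, Multiset.count ({cj, c} : Finset C) A ≤
                     Multiset.count ({cj, d} : Finset C) A)
    (hstr : ∃ cj ∈ L, Multiset.count ({cj, c} : Finset C) A <
                      Multiset.count ({cj, d} : Finset C) A) :
    thieleScore s A (insert d L.toFinset) < thieleScore s A (insert c L.toFinset) ∧
    ¬ (∀ x : C, x ∉ L.toFinset →
        thieleScore s A (insert x L.toFinset) ≤ thieleScore s A (insert d L.toFinset)) := by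
  have hcP : c ∉ L.toFinset := mt List.mem_toFinset.mp hc
  have hdP : d ∉ L.toFinset := mt List.mem_toFinset.mp hd
  have hpair : pairCount A L.toFinset c < pairCount A L.toFinset d := by
    obtain ⟨cj, hcj, hlt⟩ := hstr
    exact Finset.sum_lt_sum (fun y hy => hge y (List.mem_toFinset.mp hy))
      ⟨cj, List.mem_toFinset.mpr hcj, hlt⟩
  have hlt := thieleScore_insert_lt_insert_of_pairCount_lt s h0 hAV A hsize hcP hdP (heq c d) hpair
  exact ⟨hlt, fun hmax => (hmax c hcP).not_gt hlt⟩

/-- The query function of every sequential Thiele rule with `s(2) - s(1) < s(1)` is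
concurring: in a profile with ballots of size at most 2 in which all candidates have
the same approval score, which is at most `n/k`, if `d` shares at least as many ballots
as `c` with each previously chosen candidate `c_j` (strictly more with some `c_j`),
then `ŝ(A,{c₁,…,c_ℓ,d}) < ŝ(A,{c₁,…,c_ℓ,c})`; in particular `d` does not maximize
`ŝ(A,{c₁,…,c_ℓ,·})` and is not selected next. -/
theorem seqThiele_concurring
    {C : Type*} [DecidableEq C] [Fintype C]
    (s : ℕ → ℚ) (h0 : s 0 = 0) (h1 : 0 < s 1)
    (hmono : ∀ x : ℕ, s x ≤ s (x + 1))
    (hconcave : ∀ x : ℕ, s (x + 2) - s (x + 1) ≤ s (x + 1) - s x)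
    (hAV : s 2 - s 1 < s 1)
    (A : Multiset (Finset C)) (hA : validProfile A)
    (hsize : ∀ b ∈ A, b.card ≤ 2)
    (k : ℕ) (hk : 1 ≤ k)
    (heq : ∀ c d : C, appScore A c = appScore A d)
    (hnk : ∀ c : C, appScore A c * k ≤ Multiset.card A)
    (L : List C) (hnd : L.Nodup)
    (c d : C) (hc : c ∉ L) (hd : d ∉ L)
    (hge : ∀ cj ∈ L, Multiset.count ({cj, c} : Finset C) A ≤
                     Multiset.count ({cj, d} : Finset C) A)
    (hstr : ∃ cj ∈ L, Multiset.count ({cj, c} : Finset C) A <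
                      Multiset.count ({cj, d} : Finset C) A) :
    thieleScore s A (insert d L.toFinset) < thieleScore s A (insert c L.toFinset) ∧
    ¬ (∀ x : C, x ∉ L.toFinset →
        thieleScore s A (insert x L.toFinset) ≤ thieleScore s A (insert d L.toFinset)) :=
  seqThiele_concurring_general s h0 hAV A hsize heq L c d hc hd hge hstr
end

section
/- The query function of seqPhragmén is concurring: for every profile A with |A_i| ≤ 2 for all i ∈ N_A and |N_A(c)| = |N_A(d)| ≤ n/k for all c,d ∈ C, every sequence (c_1,…,c_ℓ) of distinct candidates that is valid for the seqPhragmén process on A, and all candidates c,d ∉ {c_1,…,c_ℓ} such that |{i ∈ N_A : A_i = {c_j,d}}| ≥ |{i ∈ N_A : A_i = {c_j,c}}| for all j ≤ ℓ with at least one inequality strict, it holds that ℓ_{ℓ+1}(d) > ℓ_{ℓ+1}(c); in particular d does not minimize ℓ_{ℓ+1} and is not elected next. -/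
/-- Phragmén load value `ℓ(c) = (1 + Σ_{i ∈ N_A(c)} y(i)) / |N_A(c)|`, where the load
function `y` is keyed by ballots (voters with equal ballots always carry equal loads). -/
def phragLoadVal {C : Type*} [DecidableEq C] (A : Multiset (Finset C))
    (y : Finset C → ℚ) (c : C) : ℚ :=
  (1 + ((A.filter fun b => c ∈ b).map y).sum) /
    ((Multiset.card (A.filter fun b => c ∈ b) : ℚ))

/-- `phragValid A y E L`: starting from voter loads `y` and already elected candidates
`E`, the sequence `L` is a valid continuation of the seqPhragmén process: each elected
candidate is approved by some voter and minimizes the load value among unelected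
candidates with nonempty support, and loads are updated accordingly. -/
def phragValid {C : Type*} [DecidableEq C] (A : Multiset (Finset C)) :
    (Finset C → ℚ) → Finset C → List C → Prop
  | _, _, [] => True
  | y, E, c :: rest =>
      c ∉ E ∧ (A.filter fun b => c ∈ b) ≠ 0 ∧
      (∀ d : C, d ∉ E → (A.filter fun b => d ∈ b) ≠ 0 →
        phragLoadVal A y c ≤ phragLoadVal A y d) ∧
      phragValid A (fun b => if c ∈ b then phragLoadVal A y c else y b) (insert c E) rest

/-- The sequential Phragmén rule. -/
def seqPhragmen {C : Type*} [DecidableEq C] (A : Multiset (Finset C)) (k : ℕ) :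
    Set (Finset C) :=
  {W | ∃ L : List C, L.toFinset = W ∧ L.length = k ∧ phragValid A (fun _ => 0) ∅ L}

/-- One step of the seqPhragmén load update after electing `c`. -/
def phragStep {C : Type*} [DecidableEq C] (A : Multiset (Finset C))
    (y : Finset C → ℚ) (c : C) : Finset C → ℚ :=
  fun b => if c ∈ b then phragLoadVal A y c else y b

/-- The voter loads after electing the sequence `L` (in order), starting from loads 0. -/
def phragLoadsAfter {C : Type*} [DecidableEq C] (A : Multiset (Finset C))
    (L : List C) : Finset C → ℚ :=
  L.foldl (phragStep A) (fun _ => 0)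

theorem Multiset.sum_map_ite_zero {α M : Type*} [AddCommMonoid M] (s : Multiset α)
    (p : α → Prop) [DecidablePred p] (v : M) :
    (s.map fun a => if p a then v else 0).sum = Multiset.card (s.filter p) • v := by
  induction s using Multiset.induction_on with
  | empty => simp
  | cons a s ih => by_cases h : p a <;> simp [h, ih, add_nsmul, add_comm]

section SeqPhragmen

variable {C : Type*} [DecidableEq C] (A : Multiset (Finset C))

/-- `phragElectionLoad A L y x` is the value `ℓ_r(c_r)` at which `x = c_r` is elected when
the process runs through `L` from loads `y` (and `0` if `x ∉ L`). -/
def phragElectionLoad : List C → (Finset C → ℚ) → C → ℚ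
  | [], _, _ => 0
  | e :: rest, y, x =>
      if x = e then phragLoadVal A y e else phragElectionLoad rest (phragStep A y e) x

theorem phragLoadVal_nonneg {y : Finset C → ℚ} (hy : ∀ b, 0 ≤ y b) (c : C) :
    0 ≤ phragLoadVal A y c :=
  div_nonneg
    (add_nonneg zero_le_one (Multiset.sum_nonneg (Multiset.forall_mem_map_iff.2 fun b _ => hy b)))
    (Nat.cast_nonneg _)

theorem phragLoadVal_pos {y : Finset C → ℚ} (hy : ∀ b, 0 ≤ y b) {c : C}
    (hc : 0 < appScore A c) : 0 < phragLoadVal A y c :=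
  div_pos
    (add_pos_of_pos_of_nonneg zero_lt_one
      (Multiset.sum_nonneg (Multiset.forall_mem_map_iff.2 fun b _ => hy b)))
    (Nat.cast_pos.2 hc)

theorem phragStep_nonneg {y : Finset C → ℚ} (hy : ∀ b, 0 ≤ y b) (e : C) (b : Finset C) :
    0 ≤ phragStep A y e b := by
  unfold phragStep
  split
  · exact phragLoadVal_nonneg A hy e
  · exact hy b

theorem phragElectionLoad_pos :
    ∀ {L : List C} {y : Finset C → ℚ} {x : C}, (∀ e ∈ L, 0 < appScore A e) →
      (∀ b, 0 ≤ y b) → x ∈ L → 0 < phragElectionLoad A L y x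
  | e :: rest, y, x, hL, hy, hx => by
      rw [phragElectionLoad]
      split_ifs with hxe
      · exact phragLoadVal_pos A hy (hL e List.mem_cons_self)
      · exact phragElectionLoad_pos (fun e' he' => hL e' (List.mem_cons_of_mem _ he'))
          (phragStep_nonneg A hy e) ((List.mem_cons.1 hx).resolve_left hxe)

theorem foldl_phragStep_apply_of_forall_not_mem :
    ∀ {L : List C} {y : Finset C → ℚ} {b : Finset C}, (∀ e ∈ L, e ∉ b) →
      L.foldl (phragStep A) y b = y b
  | [], _, _, _ => rfl
  | e :: rest, y, b, h => by
      rw [List.foldl_cons, foldl_phragStep_apply_of_forall_not_mem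
        (fun e' he' => h e' (List.mem_cons_of_mem _ he'))]
      simp [phragStep, h e List.mem_cons_self]

/-- The sum has at most one nonzero term: the load at which the unique member of `L` on `b`
was elected. -/
theorem foldl_phragStep_apply_eq_sum :
    ∀ {L : List C} {y : Finset C → ℚ} {b : Finset C}, y b = 0 → L.countP (· ∈ b) ≤ 1 →
      L.foldl (phragStep A) y b
        = (L.map fun x => if x ∈ b then phragElectionLoad A L y x else 0).sum
  | [], _, _, hy, _ => hy
  | e :: rest, y, b, hy, hb => by
      rw [List.countP_cons] at hb
      by_cases he : e ∈ b
      · have hrest : ∀ x ∈ rest, x ∉ b := by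
          simpa [List.countP_eq_zero] using (show rest.countP (· ∈ b) = 0 by simp_all)
        rw [List.foldl_cons, foldl_phragStep_apply_of_forall_not_mem A hrest,
          List.map_cons, List.sum_cons, List.sum_eq_zero (by simp_all)]
        simp [phragStep, phragElectionLoad, he]
      · have hstep : phragStep A y e b = 0 := by simp [phragStep, he, hy]
        rw [List.foldl_cons, foldl_phragStep_apply_eq_sum hstep (by simpa [he] using hb),
          List.map_cons, List.sum_cons, if_neg he, zero_add]
        refine congrArg List.sum (List.map_congr_left fun x _ => ?_)
        split_ifs with hx
        · rw [phragElectionLoad, if_neg (by rintro rfl; exact he hx)]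
        · rfl

theorem countP_mem_le_one {L : List C} (hL : L.Nodup) {b : Finset C} (hb : b.card ≤ 2)
    {c : C} (hcb : c ∈ b) (hc : c ∉ L) : L.countP (· ∈ b) ≤ 1 := by
  have hsub : (L.filter (· ∈ b)).toFinset ⊆ b.erase c := by
    intro x hx
    simp only [List.mem_toFinset, List.mem_filter, decide_eq_true_eq] at hx
    exact Finset.mem_erase.2 ⟨fun hxc => hc (hxc ▸ hx.1), hx.2⟩
  calc L.countP (· ∈ b) = (L.filter (· ∈ b)).toFinset.card := by
        rw [List.toFinset_card_of_nodup (hL.filter _), List.countP_eq_length_filter]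
    _ ≤ (b.erase c).card := Finset.card_le_card hsub
    _ ≤ 1 := by rw [Finset.card_erase_of_mem hcb]; omega

theorem card_filter_mem_filter_mem_eq_count (hsize : ∀ b ∈ A, b.card ≤ 2) {c x : C}
    (hxc : x ≠ c) :
    Multiset.card ((A.filter (c ∈ ·)).filter (x ∈ ·)) = Multiset.count {x, c} A := by
  rw [Multiset.count_eq_card_filter_eq, Multiset.filter_filter]
  congr 1
  refine Multiset.filter_congr fun b hb => ⟨fun ⟨hxb, hcb⟩ => ?_, ?_⟩
  · refine Finset.eq_of_subset_of_card_le (Finset.insert_subset hxb (by simpa using hcb)) ?_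
    rw [Finset.card_pair hxc]
    exact hsize b hb
  · rintro rfl
    simp

theorem sum_phragLoadsAfter_supporters (hsize : ∀ b ∈ A, b.card ≤ 2) {L : List C}
    (hL : L.Nodup) {c : C} (hc : c ∉ L) :
    ((A.filter (c ∈ ·)).map (phragLoadsAfter A L)).sum
      = (L.map fun x => (Multiset.count {x, c} A : ℚ) * phragElectionLoad A L 0 x).sum := by
  set t := phragElectionLoad A L 0
  calc ((A.filter (c ∈ ·)).map (phragLoadsAfter A L)).sum
      = ((A.filter (c ∈ ·)).map fun b => (L.map fun x => if x ∈ b then t x else 0).sum).sum := by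
        refine congrArg Multiset.sum (Multiset.map_congr rfl fun b hb => ?_)
        obtain ⟨hbA, hcb⟩ := Multiset.mem_filter.1 hb
        exact foldl_phragStep_apply_eq_sum A rfl (countP_mem_le_one hL (hsize b hbA) hcb hc)
    _ = (L.map fun x => ((A.filter (c ∈ ·)).map fun b => if x ∈ b then t x else 0).sum).sum := by
        simpa using Multiset.sum_map_sum_map (A.filter (c ∈ ·)) (L : Multiset C)
    _ = (L.map fun x => (Multiset.count {x, c} A : ℚ) * t x).sum := by
        refine congrArg List.sum (List.map_congr_left fun x hx => ?_)
        rw [Multiset.sum_map_ite_zero, nsmul_eq_mul,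
          card_filter_mem_filter_mem_eq_count A hsize (by rintro rfl; exact hc hx)]

theorem phragLoadVal_lt_of_sum_lt {y : Finset C → ℚ} {c d : C}
    (hcd : appScore A c = appScore A d) (hc : 0 < appScore A c)
    (hsum : ((A.filter (c ∈ ·)).map y).sum < ((A.filter (d ∈ ·)).map y).sum) :
    phragLoadVal A y c < phragLoadVal A y d := by
  have hcd' : Multiset.card (A.filter (c ∈ ·)) = Multiset.card (A.filter (d ∈ ·)) := hcd
  unfold phragLoadVal
  rw [← hcd']
  exact div_lt_div_of_pos_right (by linarith) (Nat.cast_pos.2 hc)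

theorem appScore_pos_of_forall_eq (hA : validProfile A)
    (heq : ∀ c d : C, appScore A c = appScore A d) (c : C) : 0 < appScore A c := by
  obtain ⟨b, hb⟩ := Multiset.exists_mem_of_ne_zero hA.1
  obtain ⟨e, he⟩ := Finset.nonempty_iff_ne_empty.2 (hA.2 b hb)
  rw [heq c e]
  exact Multiset.card_pos_iff_exists_mem.2 ⟨b, Multiset.mem_filter.2 ⟨hb, he⟩⟩

end SeqPhragmen

theorem seqPhragmen_concurring_general
    {C : Type*} [DecidableEq C]
    (A : Multiset (Finset C)) (hA : validProfile A)
    (hsize : ∀ b ∈ A, b.card ≤ 2)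
    (heq : ∀ c d : C, appScore A c = appScore A d)
    (L : List C) (hnd : L.Nodup)
    (c d : C) (hc : c ∉ L) (hd : d ∉ L)
    (hge : ∀ cj ∈ L, Multiset.count ({cj, c} : Finset C) A ≤
                     Multiset.count ({cj, d} : Finset C) A)
    (hstr : ∃ cj ∈ L, Multiset.count ({cj, c} : Finset C) A <
                      Multiset.count ({cj, d} : Finset C) A) :
    phragLoadVal A (phragLoadsAfter A L) c < phragLoadVal A (phragLoadsAfter A L) d ∧
    ¬ (∀ e : C, e ∉ L.toFinset → (A.filter fun b => e ∈ b) ≠ 0 →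
        phragLoadVal A (phragLoadsAfter A L) d ≤ phragLoadVal A (phragLoadsAfter A L) e) := by
  have hpos := appScore_pos_of_forall_eq A hA heq
  have hload : ∀ x ∈ L, 0 < phragElectionLoad A L 0 x := fun x hx =>
    phragElectionLoad_pos A (fun e _ => hpos e) (fun _ => le_rfl) hx
  have hlt : phragLoadVal A (phragLoadsAfter A L) c < phragLoadVal A (phragLoadsAfter A L) d := by
    refine phragLoadVal_lt_of_sum_lt A (heq c d) (hpos c) ?_
    rw [sum_phragLoadsAfter_supporters A hsize hnd hc,
      sum_phragLoadsAfter_supporters A hsize hnd hd]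
    obtain ⟨cj, hcj, hcount⟩ := hstr
    refine List.sum_lt_sum _ _ (fun x hx => ?_) ⟨cj, hcj, ?_⟩
    · exact mul_le_mul_of_nonneg_right (by exact_mod_cast hge x hx) (hload x hx).le
    · exact mul_lt_mul_of_pos_right (by exact_mod_cast hcount) (hload cj hcj)
  refine ⟨hlt, fun hmin => (hmin c (by simpa using hc) ?_).not_gt hlt⟩
  exact Multiset.card_pos.1 (hpos c)

/-- The query function of seqPhragmén is concurring: in a profile with ballots of size
at most 2 in which all candidates have the same approval score, which is at most `n/k`,
if the sequence `(c₁,…,c_ℓ)` is valid for the seqPhragmén process and `d` shares at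
least as many ballots as `c` with each `c_j` (strictly more with some `c_j`), then
`ℓ_{ℓ+1}(c) < ℓ_{ℓ+1}(d)`; in particular `d` does not minimize `ℓ_{ℓ+1}` and is not
elected next. -/
theorem seqPhragmen_concurring
    {C : Type*} [DecidableEq C] [Fintype C]
    (A : Multiset (Finset C)) (hA : validProfile A)
    (hsize : ∀ b ∈ A, b.card ≤ 2)
    (k : ℕ) (hk : 1 ≤ k)
    (heq : ∀ c d : C, appScore A c = appScore A d)
    (hnk : ∀ c : C, appScore A c * k ≤ Multiset.card A)
    (L : List C) (hnd : L.Nodup)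
    (hvalid : phragValid A (fun _ => 0) ∅ L)
    (c d : C) (hc : c ∉ L) (hd : d ∉ L)
    (hge : ∀ cj ∈ L, Multiset.count ({cj, c} : Finset C) A ≤
                     Multiset.count ({cj, d} : Finset C) A)
    (hstr : ∃ cj ∈ L, Multiset.count ({cj, c} : Finset C) A <
                      Multiset.count ({cj, d} : Finset C) A) :
    phragLoadVal A (phragLoadsAfter A L) c < phragLoadVal A (phragLoadsAfter A L) d ∧
    ¬ (∀ e : C, e ∉ L.toFinset → (A.filter fun b => e ∈ b) ≠ 0 →
        phragLoadVal A (phragLoadsAfter A L) d ≤ phragLoadVal A (phragLoadsAfter A L) e) :=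
  seqPhragmen_concurring_general A hA hsize heq L hnd c d hc hd hge hstr
end

section
/- seqPhragmén satisfies continuity in the following sense: let A and A' be approval profiles on disjoint voter sets, fix a sequence (c_1,…,c_{r-1}) of distinct candidates each of which is approved by at least one voter of A, let y_j and ℓ_j denote the loads and load values computed in profile A when exactly this sequence is elected, and let y*_j and ℓ*_j denote the corresponding quantities computed in the profile λA + A' (λ copies of each voter of A plus all voters of A'). Then for every candidate c ∉ {c_1,…,c_{r-1}} with N_A(c) ≠ ∅, λ·ℓ*_r(c) converges to ℓ_r(c) as λ → ∞ (and λ·y*_r(i) converges to y_r(i) for every voter i of A). -/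
/-!
In `λA + A'` the supporters of `c` are `λ` copies of `N_A(c)` together with `N_{A'}(c)`.
Writing `G = λ y*` for the rescaled loads, this gives
`λ ℓ*(c) = (1 + Σ_{N_A(c)} G + λ⁻¹ Σ_{N_{A'}(c)} G) / (|N_A(c)| + λ⁻¹ |N_{A'}(c)|)`,
so if `λ y* → y` pointwise then `λ ℓ*(c) → ℓ(c)` whenever `N_A(c) ≠ ∅`. Every load update
of seqPhragmén is either such a load value or the previous load, so the convergence
propagates along the elected sequence by induction, starting from the zero loads.
-/

open Filter Topology

section ScaledProfile

variable {C : Type*} [DecidableEq C] (A A' : Multiset (Finset C))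

lemma phragLoadVal_nsmul_add (n : ℕ) (y : Finset C → ℚ) (c : C) :
    phragLoadVal (n • A + A') y c =
      (1 + n * ((A.filter (c ∈ ·)).map y).sum + ((A'.filter (c ∈ ·)).map y).sum) /
        (n * Multiset.card (A.filter (c ∈ ·)) + Multiset.card (A'.filter (c ∈ ·))) := by
  simp only [phragLoadVal, Multiset.filter_add, Multiset.filter_nsmul, Multiset.map_add,
    Multiset.map_nsmul, Multiset.sum_add, Multiset.sum_nsmul, nsmul_eq_mul,
    Multiset.card_add, Multiset.card_nsmul]
  push_cast
  ring

lemma tendsto_mul_phragLoadVal_nsmul_add (F : ℕ → Finset C → ℚ) (y : Finset C → ℚ)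
    (hF : ∀ b, Tendsto (fun lam : ℕ => (lam : ℚ) * F lam b) atTop (𝓝 (y b)))
    (c : C) (hc : A.filter (c ∈ ·) ≠ 0) :
    Tendsto (fun lam : ℕ => (lam : ℚ) * phragLoadVal (lam • A + A') (F lam) c)
      atTop (𝓝 (phragLoadVal A y c)) := by
  simp only [phragLoadVal_nsmul_add]
  set s := A.filter (c ∈ ·)
  set t := A'.filter (c ∈ ·)
  have hs : (Multiset.card s : ℚ) ≠ 0 := by
    exact_mod_cast (Multiset.card_pos.2 hc).ne'
  have hinv : Tendsto (fun lam : ℕ => (lam : ℚ)⁻¹) atTop (𝓝 0) :=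
    tendsto_inv_atTop_zero.comp tendsto_natCast_atTop_atTop
  have hsum (u : Multiset (Finset C)) :
      Tendsto (fun lam : ℕ => (u.map fun b => (lam : ℚ) * F lam b).sum) atTop
        (𝓝 (u.map y).sum) :=
    tendsto_multiset_sum u fun b _ => hF b
  have hnum : Tendsto (fun lam : ℕ => 1 + (s.map fun b => (lam : ℚ) * F lam b).sum +
      (t.map fun b => (lam : ℚ) * F lam b).sum * (lam : ℚ)⁻¹) atTop
      (𝓝 (1 + (s.map y).sum)) := by
    simpa using (tendsto_const_nhds.add (hsum s)).add ((hsum t).mul hinv)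
  have hden : Tendsto (fun lam : ℕ => (Multiset.card s : ℚ) + Multiset.card t * (lam : ℚ)⁻¹)
      atTop (𝓝 (Multiset.card s : ℚ)) := by
    simpa using tendsto_const_nhds.add (hinv.const_mul (Multiset.card t : ℚ))
  refine (hnum.div hden hs).congr' ?_
  filter_upwards [eventually_gt_atTop 0] with lam hlam
  have hlam₀ : (lam : ℚ) ≠ 0 := Nat.cast_ne_zero.2 hlam.ne'
  rw [Pi.div_apply, Multiset.sum_map_mul_left, Multiset.sum_map_mul_left]
  field_simp

lemma tendsto_mul_foldl_phragStep_nsmul_add (L : List C)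
    (hL : ∀ c ∈ L, A.filter (c ∈ ·) ≠ 0) (F : ℕ → Finset C → ℚ) (y : Finset C → ℚ)
    (hF : ∀ b, Tendsto (fun lam : ℕ => (lam : ℚ) * F lam b) atTop (𝓝 (y b))) (b : Finset C) :
    Tendsto (fun lam : ℕ => (lam : ℚ) * L.foldl (phragStep (lam • A + A')) (F lam) b)
      atTop (𝓝 (L.foldl (phragStep A) y b)) := by
  induction L generalizing F y with
  | nil => exact hF b
  | cons c L ih =>
    refine ih (fun d hd => hL d (List.mem_cons_of_mem c hd)) _ _ fun b => ?_
    by_cases hb : c ∈ b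
    · simpa [phragStep, hb] using
        tendsto_mul_phragLoadVal_nsmul_add A A' F y hF c (hL c List.mem_cons_self)
    · simpa [phragStep, hb] using hF b

end ScaledProfile

theorem seqPhragmen_continuity_general
    {C : Type*} [DecidableEq C]
    (A A' : Multiset (Finset C))
    (L : List C)
    (hsup : ∀ c ∈ L, (A.filter fun b => c ∈ b) ≠ 0) :
    (∀ c : C, c ∉ L → (A.filter fun b => c ∈ b) ≠ 0 →
      Filter.Tendsto
        (fun lam : ℕ => (lam : ℚ) *
          phragLoadVal (lam • A + A') (phragLoadsAfter (lam • A + A') L) c)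
        Filter.atTop
        (nhds (phragLoadVal A (phragLoadsAfter A L) c))) ∧
    (∀ b ∈ A,
      Filter.Tendsto
        (fun lam : ℕ => (lam : ℚ) * phragLoadsAfter (lam • A + A') L b)
        Filter.atTop
        (nhds (phragLoadsAfter A L b))) := by
  have hloads (b : Finset C) :
      Tendsto (fun lam : ℕ => (lam : ℚ) * phragLoadsAfter (lam • A + A') L b) atTop
        (𝓝 (phragLoadsAfter A L b)) :=
    tendsto_mul_foldl_phragStep_nsmul_add A A' L hsup _ _ (fun _ => by simp) b
  exact ⟨fun c _ hc => tendsto_mul_phragLoadVal_nsmul_add A A' _ _ hloads c hc,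
    fun b _ => hloads b⟩

/-- seqPhragmén satisfies continuity: fix profiles `A`, `A'` and a sequence `L` of
distinct candidates each approved by some voter of `A`, and consider the loads
computed when exactly this sequence is elected, in `A` and in `λA + A'` (λ copies of
each voter of `A` plus all voters of `A'`). Then for every candidate `c` outside the
sequence approved by some voter of `A`, `λ·ℓ*_r(c) → ℓ_r(c)` as `λ → ∞`, and
`λ·y*_r(i) → y_r(i)` for every voter `i` of `A`. -/
theorem seqPhragmen_continuity
    {C : Type*} [DecidableEq C]
    (A A' : Multiset (Finset C)) (hA : validProfile A) (hA' : validProfile A')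
    (L : List C) (hnd : L.Nodup)
    (hsup : ∀ c ∈ L, (A.filter fun b => c ∈ b) ≠ 0) :
    (∀ c : C, c ∉ L → (A.filter fun b => c ∈ b) ≠ 0 →
      Filter.Tendsto
        (fun lam : ℕ => (lam : ℚ) *
          phragLoadVal (lam • A + A') (phragLoadsAfter (lam • A + A') L) c)
        Filter.atTop
        (nhds (phragLoadVal A (phragLoadsAfter A L) c))) ∧
    (∀ b ∈ A,
      Filter.Tendsto
        (fun lam : ℕ => (lam : ℚ) * phragLoadsAfter (lam • A + A') L b)
        Filter.atTop
        (nhds (phragLoadsAfter A L b))) :=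
  seqPhragmen_continuity_general A A' L hsup
end

section
/- On every profile A in which all ballots have size at most 2 and all candidates have equal approval score at most n/k (i.e., |A_i| ≤ 2 for all i ∈ N_A and |N_A(c)| = |N_A(d)| ≤ n/k for all c,d ∈ C), the method of equal shares and seqPhragmén coincide: MES(A,k) = seqPhragmén(A,k). -/
/-- Total budget of the supporters of candidate `c`, where the budget function `x` is
keyed by ballots (voters with equal ballots always carry equal budgets). -/
def supBudget {C : Type*} [DecidableEq C] (A : Multiset (Finset C))
    (x : Finset C → ℚ) (c : C) : ℚ :=
  ((A.filter fun b => c ∈ b).map x).sum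

/-- Candidate `c` is affordable: its supporters have a total budget of at least 1. -/
def mesAfford {C : Type*} [DecidableEq C] (A : Multiset (Finset C))
    (x : Finset C → ℚ) (c : C) : Prop :=
  1 ≤ supBudget A x c

/-- `ρ` is the per-voter price of candidate `c`: splitting the cost 1 as equally as
possible, `Σ_{i ∈ N_A(c)} min(ρ, x_i) = 1`, with `ρ` minimal such. -/
def mesRho {C : Type*} [DecidableEq C] (A : Multiset (Finset C))
    (x : Finset C → ℚ) (c : C) (ρ : ℚ) : Prop :=
  ((A.filter fun b => c ∈ b).map fun b => min ρ (x b)).sum = 1 ∧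
  ∀ ρ' : ℚ, ((A.filter fun b => c ∈ b).map fun b => min ρ' (x b)).sum = 1 → ρ ≤ ρ'

/-- `mesPhase1 A x E L xf`: starting from budgets `x` and already elected candidates
`E`, the sequence `L` is a valid run of Phase 1 of MES ending with budgets `xf`: each
elected candidate is affordable and minimizes the maximal per-voter payment `ρ` among
the affordable unelected candidates, and budgets are reduced accordingly. -/
def mesPhase1 {C : Type*} [DecidableEq C] (A : Multiset (Finset C)) :
    (Finset C → ℚ) → Finset C → List C → (Finset C → ℚ) → Prop
  | x, _, [], xf => xf = x
  | x, E, c :: rest, xf =>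
      c ∉ E ∧ mesAfford A x c ∧
      ∃ ρ : ℚ, mesRho A x c ρ ∧
        (∀ d : C, d ∉ E → mesAfford A x d → ∀ ρ' : ℚ, mesRho A x d ρ' → ρ ≤ ρ') ∧
        mesPhase1 A (fun b => if c ∈ b then x b - min ρ (x b) else x b)
          (insert c E) rest xf

/-- In the Phragmén completion phase, `buyTime A x c` is the time at which candidate
`c` would be bought when every voter's budget grows uniformly from `x`: the first time
`t ≥ 0` at which the supporters' total budget reaches 1. -/
def buyTime {C : Type*} [DecidableEq C] (A : Multiset (Finset C))
    (x : Finset C → ℚ) (c : C) : ℚ :=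
  max 0 ((1 - supBudget A x c) / ((Multiset.card (A.filter fun b => c ∈ b) : ℚ)))

/-- `mesPhase2 A x E L`: starting from budgets `x` (kept from Phase 1) and already
elected candidates `E`, the sequence `L` is a valid run of the seqPhragmén completion
(Phase 2) of MES: budgets grow uniformly over time, each elected candidate is bought
as soon as its supporters' total budget reaches 1 (i.e. it minimizes the buying time),
whereupon its supporters' budgets are reset to 0. -/
def mesPhase2 {C : Type*} [DecidableEq C] (A : Multiset (Finset C)) :
    (Finset C → ℚ) → Finset C → List C → Prop
  | _, _, [] => True
  | x, E, c :: rest =>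
      c ∉ E ∧ (A.filter fun b => c ∈ b) ≠ 0 ∧
      (∀ d : C, d ∉ E → (A.filter fun b => d ∈ b) ≠ 0 →
        buyTime A x c ≤ buyTime A x d) ∧
      mesPhase2 A (fun b => if c ∈ b then 0 else x b + buyTime A x c) (insert c E) rest

/-- The method of equal shares (with the seqPhragmén completion): every voter starts
with budget `k/n`; Phase 1 runs until either `k` candidates are elected or no further
candidate is affordable, in which case Phase 2 completes the committee. -/
def mes {C : Type*} [DecidableEq C] (A : Multiset (Finset C)) (k : ℕ) :
    Set (Finset C) :=
  {W | ∃ (L1 : List C) (xf : Finset C → ℚ),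
      mesPhase1 A (fun _ => (k : ℚ) / (Multiset.card A : ℚ)) ∅ L1 xf ∧
      ((L1.length = k ∧ W = L1.toFinset) ∨
        (L1.length < k ∧
          (∀ c : C, c ∉ L1.toFinset → ¬ mesAfford A xf c) ∧
          ∃ L2 : List C, mesPhase2 A xf L1.toFinset L2 ∧
            (L1 ++ L2).length = k ∧ W = (L1 ++ L2).toFinset))}

/-!
Write `q = k/n` and `s` for the common approval score, so that `s q ≤ 1`. Along an MES run
every budget stays in `[0, q]`, and `y = q - x` (the money a voter has spent) is exactly its
seqPhragmén load. If `s q < 1` nothing is ever affordable. If `s q = 1`, the load value of a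
candidate whose supporters hold total budget `B` is `q + (1 - B) q ≥ q`, so while some
candidate is affordable the affordable candidates are exactly the load minimizers, each
bought at price `q`. Once nothing is affordable, Phase 2 is seqPhragmén shifted in time:
under `x = T - y` the buying time of a candidate is its load value minus `T`.
-/

section

variable {C : Type*} [DecidableEq C] {A : Multiset (Finset C)}

theorem filter_ne_zero_of_appScore_mul_eq_one {d : C} {q : ℚ}
    (hq1 : (appScore A d : ℚ) * q = 1) : A.filter (d ∈ ·) ≠ 0 := fun h => by
  simp [appScore, h] at hq1

theorem supBudget_eq_of_eq_sub {x y : Finset C → ℚ} {T : ℚ} (hrel : ∀ b ∈ A, x b = T - y b)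
    (d : C) : supBudget A x d = appScore A d * T - ((A.filter (d ∈ ·)).map y).sum := by
  rw [supBudget, Multiset.map_congr rfl fun b hb => hrel b (Multiset.mem_of_mem_filter hb),
    Multiset.sum_map_sub]
  simp [appScore]

theorem supBudget_le_of_le {x : Finset C → ℚ} {q : ℚ} (hxq : ∀ b ∈ A, x b ≤ q) (d : C) :
    supBudget A x d ≤ appScore A d * q :=
  calc supBudget A x d ≤ ((A.filter (d ∈ ·)).map fun _ => q).sum :=
        Multiset.sum_map_le_sum_map _ _ fun b hb => hxq b (Multiset.mem_of_mem_filter hb)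
    _ = appScore A d * q := by simp [appScore]

theorem phragLoadVal_sub_eq {x y : Finset C → ℚ} {T : ℚ} (hrel : ∀ b ∈ A, x b = T - y b)
    {d : C} (hd : A.filter (d ∈ ·) ≠ 0) :
    phragLoadVal A y d - T = (1 - supBudget A x d) / appScore A d := by
  have hs : (appScore A d : ℚ) ≠ 0 := by simpa [appScore] using hd
  rw [supBudget_eq_of_eq_sub hrel]
  change (1 + _) / (appScore A d : ℚ) - T = _
  field_simp
  ring

theorem buyTime_eq_phragLoadVal_sub {x y : Finset C → ℚ} {T : ℚ}
    (hrel : ∀ b ∈ A, x b = T - y b) {d : C} (hd : A.filter (d ∈ ·) ≠ 0)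
    (hbd : supBudget A x d ≤ 1) : buyTime A x d = phragLoadVal A y d - T := by
  rw [phragLoadVal_sub_eq hrel hd]
  exact max_eq_right (div_nonneg (sub_nonneg.2 hbd) (Nat.cast_nonneg _))

theorem supBudget_after_buy_le_one {x : Finset C → ℚ} {c d : C} {t : ℚ} (hx0 : ∀ b ∈ A, 0 ≤ x b)
    (ht : 0 ≤ t) (hbd : supBudget A x d ≤ 1) (htd : t ≤ buyTime A x d) :
    supBudget A (fun b => if c ∈ b then 0 else x b + t) d ≤ 1 := by
  have hgrowth : (appScore A d : ℚ) * t ≤ 1 - supBudget A x d := by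
    rcases (Nat.cast_nonneg (α := ℚ) (appScore A d)).eq_or_lt with h0 | hpos
    · rw [← h0]
      linarith
    · have : t ≤ (1 - supBudget A x d) / appScore A d :=
        htd.trans_eq (max_eq_right (div_nonneg (sub_nonneg.2 hbd) hpos.le))
      rwa [le_div_iff₀ hpos, mul_comm] at this
  calc supBudget A (fun b => if c ∈ b then 0 else x b + t) d
      ≤ supBudget A (fun b => x b + t) d :=
        Multiset.sum_map_le_sum_map _ _ fun b hb => by
          split_ifs
          · exact add_nonneg (hx0 b (Multiset.mem_of_mem_filter hb)) ht
          · exact le_rfl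
    _ = supBudget A x d + appScore A d * t := by simp [supBudget, Multiset.sum_map_add, appScore]
    _ ≤ 1 := by linarith

theorem mesPhase2_iff_phragValid {x y : Finset C → ℚ} {T : ℚ} {E : Finset C} (L : List C)
    (hrel : ∀ b ∈ A, x b = T - y b) (hx0 : ∀ b ∈ A, 0 ≤ x b)
    (hbd : ∀ d ∉ E, supBudget A x d ≤ 1) :
    mesPhase2 A x E L ↔ phragValid A y E L := by
  induction L generalizing x y T E with
  | nil => exact Iff.rfl
  | cons c L ih =>
    have hbuy : ∀ d ∉ E, A.filter (d ∈ ·) ≠ 0 → buyTime A x d = phragLoadVal A y d - T :=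
      fun d hd hN => buyTime_eq_phragLoadVal_sub hrel hN (hbd d hd)
    refine and_congr_right fun hcE => and_congr_right fun hc => ?_
    have hmin_iff : (∀ d, d ∉ E → A.filter (d ∈ ·) ≠ 0 → buyTime A x c ≤ buyTime A x d) ↔
        ∀ d, d ∉ E → A.filter (d ∈ ·) ≠ 0 → phragLoadVal A y c ≤ phragLoadVal A y d :=
      forall₃_congr fun d hd hN => by rw [hbuy c hcE hc, hbuy d hd hN, sub_le_sub_iff_right]
    rw [hmin_iff]
    refine and_congr_right fun hmin =>
      ih (T := phragLoadVal A y c) (fun b hb => ?_) (fun b hb => ?_) fun d hd => ?_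
    · split_ifs
      · ring
      · rw [hbuy c hcE hc, hrel b hb]
        ring
    · split_ifs
      · exact le_rfl
      · exact add_nonneg (hx0 b hb) (le_max_left _ _)
    · have hdE : d ∉ E := fun h => hd (Finset.mem_insert_of_mem h)
      by_cases hN : A.filter (d ∈ ·) = 0
      · simp [supBudget, hN]
      · refine supBudget_after_buy_le_one hx0 (le_max_left _ _) (hbd d hdE) ?_
        rw [hbuy c hcE hc, hbuy d hdE hN]
        linarith [hmin d hdE hN]

theorem le_of_sum_map_min_eq_one {x : Finset C → ℚ} {q ρ : ℚ} {d : C}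
    (hq1 : (appScore A d : ℚ) * q = 1)
    (h : ((A.filter (d ∈ ·)).map fun b => min ρ (x b)).sum = 1) : q ≤ ρ := by
  have hpos : (0 : ℚ) < appScore A d :=
    Nat.cast_pos.2 (Multiset.card_pos.2 (filter_ne_zero_of_appScore_mul_eq_one hq1))
  refine le_of_mul_le_mul_left ?_ hpos
  calc (appScore A d : ℚ) * q = ((A.filter (d ∈ ·)).map fun b => min ρ (x b)).sum := by
        rw [hq1, h]
    _ ≤ ((A.filter (d ∈ ·)).map fun _ => ρ).sum :=
        Multiset.sum_map_le_sum_map _ _ fun _ _ => min_le_left _ _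
    _ = appScore A d * ρ := by simp [appScore]

theorem mesRho.unique {x : Finset C → ℚ} {d : C} {ρ ρ' : ℚ} (h : mesRho A x d ρ)
    (h' : mesRho A x d ρ') : ρ = ρ' :=
  le_antisymm (h.2 ρ' h'.1) (h'.2 ρ h.1)

theorem mesRho_of_supBudget_eq_one {x : Finset C → ℚ} {q : ℚ} {c : C}
    (hq1 : (appScore A c : ℚ) * q = 1) (hxq : ∀ b ∈ A, x b ≤ q) (hc : supBudget A x c = 1) :
    mesRho A x c q := by
  refine ⟨?_, fun ρ' h => le_of_sum_map_min_eq_one hq1 h⟩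
  rwa [Multiset.map_congr rfl fun b hb => min_eq_right (hxq b (Multiset.mem_of_mem_filter hb))]

theorem exists_minimal_mesRho_iff {x : Finset C → ℚ} {q : ℚ} {E : Finset C} {c : C}
    (hq1 : ∀ d, (appScore A d : ℚ) * q = 1) (hxq : ∀ b ∈ A, x b ≤ q)
    (hc : supBudget A x c = 1) {P : ℚ → Prop} :
    (∃ ρ, mesRho A x c ρ ∧
        (∀ d, d ∉ E → mesAfford A x d → ∀ ρ', mesRho A x d ρ' → ρ ≤ ρ') ∧ P ρ) ↔ P q := by
  have hρ := mesRho_of_supBudget_eq_one (hq1 c) hxq hc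
  constructor
  · rintro ⟨ρ, h, -, hP⟩
    rwa [h.unique hρ] at hP
  · exact fun hP => ⟨q, hρ, fun d _ _ ρ' h => le_of_sum_map_min_eq_one (hq1 d) h.1, hP⟩

theorem phragLoadVal_eq_of_eq_sub {x y : Finset C → ℚ} {q : ℚ} {d : C}
    (hrel : ∀ b ∈ A, x b = q - y b) (hq1 : (appScore A d : ℚ) * q = 1) :
    phragLoadVal A y d = q + (1 - supBudget A x d) * q := by
  have h := phragLoadVal_sub_eq hrel (filter_ne_zero_of_appScore_mul_eq_one hq1)
  rw [div_eq_mul_inv, ← eq_inv_of_mul_eq_one_right hq1] at h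
  linarith

theorem mesAfford_iff_minimizes_phragLoadVal {x y : Finset C → ℚ} {q : ℚ} {E : Finset C}
    (hrel : ∀ b ∈ A, x b = q - y b) (hq1 : ∀ d, (appScore A d : ℚ) * q = 1)
    (hxq : ∀ b ∈ A, x b ≤ q) {d₀ : C} (hd₀E : d₀ ∉ E) (hd₀ : mesAfford A x d₀) {c : C} :
    mesAfford A x c ↔ A.filter (c ∈ ·) ≠ 0 ∧
      ∀ d, d ∉ E → A.filter (d ∈ ·) ≠ 0 → phragLoadVal A y c ≤ phragLoadVal A y d := by
  have hq0 : 0 < q := pos_of_mul_pos_right ((hq1 d₀).symm ▸ one_pos) (Nat.cast_nonneg _)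
  have hbd : ∀ d, supBudget A x d ≤ 1 := fun d => (hq1 d).symm ▸ supBudget_le_of_le hxq d
  have hload : ∀ d, phragLoadVal A y d = q + (1 - supBudget A x d) * q :=
    fun d => phragLoadVal_eq_of_eq_sub hrel (hq1 d)
  constructor
  · intro (hc : 1 ≤ supBudget A x c)
    refine ⟨filter_ne_zero_of_appScore_mul_eq_one (hq1 c), fun d _ _ => ?_⟩
    have : 1 - supBudget A x c ≤ 1 - supBudget A x d := by linarith [hbd d]
    rw [hload, hload]
    linarith [mul_le_mul_of_nonneg_right this hq0.le]
  · rintro ⟨-, hmin⟩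
    have := hmin d₀ hd₀E (filter_ne_zero_of_appScore_mul_eq_one (hq1 d₀))
    rw [hload, hload] at this
    have hd₀' : 1 ≤ supBudget A x d₀ := hd₀
    show 1 ≤ supBudget A x c
    nlinarith

def mesRun (A : Multiset (Finset C)) (x : Finset C → ℚ) (E : Finset C) (L : List C) : Prop :=
  ∃ (L₁ L₂ : List C) (xf : Finset C → ℚ), L = L₁ ++ L₂ ∧ mesPhase1 A x E L₁ xf ∧
    (L₂ = [] ∨ (∀ c, c ∉ E ∪ L₁.toFinset → ¬ mesAfford A xf c) ∧
      mesPhase2 A xf (E ∪ L₁.toFinset) L₂)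

theorem mes_eq_setOf_mesRun (k : ℕ) :
    mes A k = {W | ∃ L : List C, L.toFinset = W ∧ L.length = k ∧
      mesRun A (fun _ => (k : ℚ) / (Multiset.card A : ℚ)) ∅ L} := by
  ext W
  simp only [mes, mesRun, Set.mem_ofPred_eq, Finset.empty_union]
  constructor
  · rintro ⟨L₁, xf, h₁, ⟨hk, rfl⟩ | ⟨-, hnaff, L₂, h₂, hk, rfl⟩⟩
    · exact ⟨L₁, rfl, hk, L₁, [], xf, (List.append_nil _).symm, h₁, Or.inl rfl⟩
    · exact ⟨L₁ ++ L₂, rfl, hk, L₁, L₂, xf, rfl, h₁, Or.inr ⟨hnaff, h₂⟩⟩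
  · rintro ⟨_, rfl, rfl, L₁, L₂, xf, rfl, h₁, h₂⟩
    refine ⟨L₁, xf, h₁, ?_⟩
    cases L₂ with
    | nil => exact Or.inl ⟨by simp, by simp⟩
    | cons c L₂ =>
      obtain ⟨hnaff, h₂⟩ := h₂.resolve_left (List.cons_ne_nil _ _)
      exact Or.inr ⟨by simp, hnaff, c :: L₂, h₂, rfl, rfl⟩

theorem mesRun_nil (x : Finset C → ℚ) (E : Finset C) : mesRun A x E [] :=
  ⟨[], [], x, rfl, rfl, Or.inl rfl⟩

theorem mesRun_cons_iff {x : Finset C → ℚ} {E : Finset C} {c : C} {L : List C} :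
    mesRun A x E (c :: L) ↔
      (c ∉ E ∧ mesAfford A x c ∧ ∃ ρ, mesRho A x c ρ ∧
        (∀ d, d ∉ E → mesAfford A x d → ∀ ρ', mesRho A x d ρ' → ρ ≤ ρ') ∧
        mesRun A (fun b => if c ∈ b then x b - min ρ (x b) else x b) (insert c E) L) ∨
      ((∀ d, d ∉ E → ¬ mesAfford A x d) ∧ mesPhase2 A x E (c :: L)) := by
  have hE : ∀ L₁ : List C, E ∪ (c :: L₁).toFinset = insert c E ∪ L₁.toFinset := fun L₁ => by
    rw [List.toFinset_cons, Finset.union_insert, Finset.insert_union]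
  constructor
  · rintro ⟨_ | ⟨c', L₁⟩, L₂, xf, hL, h₁, h₂⟩
    · obtain rfl : xf = x := h₁
      obtain rfl : c :: L = L₂ := hL
      exact Or.inr (by simpa using h₂)
    · obtain ⟨rfl, rfl⟩ : c = c' ∧ L = L₁ ++ L₂ := by simpa using hL
      obtain ⟨hcE, hc, ρ, hρ, hmin, h₁⟩ := h₁
      exact Or.inl ⟨hcE, hc, ρ, hρ, hmin, L₁, L₂, xf, rfl, h₁, hE L₁ ▸ h₂⟩
  · rintro (⟨hcE, hc, ρ, hρ, hmin, L₁, L₂, xf, rfl, h₁, h₂⟩ | ⟨hnaff, h₂⟩)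
    · exact ⟨c :: L₁, L₂, xf, rfl, ⟨hcE, hc, ρ, hρ, hmin, h₁⟩, (hE L₁).symm ▸ h₂⟩
    · exact ⟨[], c :: L, x, rfl, rfl, Or.inr (by simpa using ⟨hnaff, h₂⟩)⟩

theorem mesRun_iff_phragValid (hscore : ∀ c d : C, appScore A c = appScore A d) {q : ℚ}
    (hq : ∀ d, (appScore A d : ℚ) * q ≤ 1) {x y : Finset C → ℚ} {E : Finset C} (L : List C)
    (hrel : ∀ b ∈ A, x b = q - y b) (hx0 : ∀ b ∈ A, 0 ≤ x b) (hxq : ∀ b ∈ A, x b ≤ q) :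
    mesRun A x E L ↔ phragValid A y E L := by
  induction L generalizing x y E with
  | nil => exact iff_of_true (mesRun_nil x E) trivial
  | cons c L ih =>
    have hbd : ∀ d, supBudget A x d ≤ 1 := fun d => (supBudget_le_of_le hxq d).trans (hq d)
    rw [mesRun_cons_iff]
    by_cases haff : ∃ d ∉ E, mesAfford A x d
    · obtain ⟨d₀, hd₀E, (hd₀ : 1 ≤ supBudget A x d₀)⟩ := haff
      rw [or_iff_left fun h => h.1 d₀ hd₀E hd₀]
      have hq1 : ∀ d, (appScore A d : ℚ) * q = 1 := fun d => by
        rw [hscore d d₀]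
        exact le_antisymm (hq d₀) (hd₀.trans (supBudget_le_of_le hxq d₀))
      have hafford_iff := mesAfford_iff_minimizes_phragLoadVal hrel hq1 hxq hd₀E hd₀ (c := c)
      simp only [phragValid]
      rw [hafford_iff, and_assoc]
      refine and_congr_right fun hcE => and_congr_right fun hN => and_congr_right fun hmin => ?_
      have hc : supBudget A x c = 1 := le_antisymm (hbd c) (hafford_iff.2 ⟨hN, hmin⟩)
      refine (exists_minimal_mesRho_iff hq1 hxq hc).trans ?_
      rw [show phragLoadVal A y c = q by rw [phragLoadVal_eq_of_eq_sub hrel (hq1 c), hc]; ring]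
      refine ih (fun b hb => ?_) (fun b hb => ?_) fun b hb => ?_ <;> split_ifs
      · rw [min_eq_right (hxq b hb)]
        ring
      · exact hrel b hb
      · exact sub_nonneg.2 (min_le_right _ _)
      · exact hx0 b hb
      · rw [min_eq_right (hxq b hb), sub_self]
        exact (hx0 b hb).trans (hxq b hb)
      · exact hxq b hb
    · push Not at haff
      rw [or_iff_right fun h => haff c h.1 h.2.1, and_iff_right haff]
      exact mesPhase2_iff_phragValid (c :: L) hrel hx0 fun d _ => hbd d

end

theorem mes_eq_seqPhragmen_general
    {C : Type*} [DecidableEq C]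
    (A : Multiset (Finset C))
    (k : ℕ)
    (heq : ∀ c d : C, appScore A c = appScore A d)
    (hnk : ∀ c : C, appScore A c * k ≤ Multiset.card A) :
    mes A k = seqPhragmen A k := by
  have hq : ∀ c, (appScore A c : ℚ) * (k / Multiset.card A) ≤ 1 := fun c => by
    rw [← mul_div_assoc]
    exact div_le_one_of_le₀ (by exact_mod_cast hnk c) (Nat.cast_nonneg _)
  rw [mes_eq_setOf_mesRun]
  refine Set.ext fun W => exists_congr fun L => and_congr_right' (and_congr_right' ?_)
  exact mesRun_iff_phragValid heq hq L (fun _ _ => (sub_zero _).symm) (fun _ _ => by positivity)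
    fun _ _ => le_rfl

/-- On every profile in which all ballots have size at most 2 and all candidates have
equal approval score at most `n/k`, the method of equal shares and seqPhragmén
coincide. -/
theorem mes_eq_seqPhragmen
    {C : Type*} [DecidableEq C] [Fintype C] (hm : 1 < Fintype.card C)
    (A : Multiset (Finset C)) (hA : validProfile A)
    (hsize : ∀ b ∈ A, b.card ≤ 2)
    (k : ℕ) (hk1 : 1 ≤ k) (hk2 : k < Fintype.card C)
    (heq : ∀ c d : C, appScore A c = appScore A d)
    (hnk : ∀ c : C, appScore A c * k ≤ Multiset.card A) :
    mes A k = seqPhragmen A k :=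
  mes_eq_seqPhragmen_general A k heq hnk
end

section
/- Sequential Thiele rules with strictly increasing scoring function only pick support-maximal candidates: let s be a Thiele scoring function with s(x) < s(x+1) for all x ≥ 0, let A be a laminar profile, let W ⊆ C be any set of candidates, and let c,d ∈ C∖W with ∅ ≠ N_A(d) ⊊ N_A(c). Then ŝ(A, W ∪ {c}) > ŝ(A, W ∪ {d}); in particular, given any valid sequence (c_1,…,c_ℓ) of the sequential Thiele rule with both c and d unchosen, d does not maximize ŝ(A,{c_1,…,c_ℓ,·}) and is not selected next. -/
/-- A profile is laminar if for all candidates `c, d`, the voter sets `N_A(c)` and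
`N_A(d)` are comparable by inclusion or disjoint (in the anonymous encoding:
every ballot containing `c` contains `d`, or conversely, or no ballot contains both). -/
def Laminar {C : Type*} [DecidableEq C] (A : Multiset (Finset C)) : Prop :=
  ∀ c d : C,
    (∀ b ∈ A, c ∈ b → d ∈ b) ∨ (∀ b ∈ A, d ∈ b → c ∈ b) ∨
    (∀ b ∈ A, ¬ (c ∈ b ∧ d ∈ b))

/-! Every supporter of `d` also supports `c`, so swapping `d` for `c` in a committee never lowers
a voter's number of approved members and raises it for a voter approving `c` but not `d`. A
strictly increasing `s` turns this into a strict gain of the Thiele score, and a candidate beaten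
by such a swap cannot be a maximizer at any step of the sequential rule. -/

theorem Finset.card_inter_insert_of_notMem {C : Type*} [DecidableEq C] {W : Finset C} {x : C}
    (hx : x ∉ W) (b : Finset C) :
    (b ∩ insert x W).card = (b ∩ W).card + if x ∈ b then 1 else 0 := by
  by_cases hxb : x ∈ b
  · rw [inter_insert_of_mem hxb, card_insert_of_notMem fun h => hx (mem_inter.mp h).2,
      if_pos hxb]
  · rw [inter_insert_of_notMem hxb, if_neg hxb, add_zero]

section ThieleScore

open Finset

variable {C : Type*} [DecidableEq C] {s : ℕ → ℚ} {W : Finset C} {c d : C} {b : Finset C}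

theorem score_inter_insert_le_of_imp (hs : Monotone s) (hcW : c ∉ W) (hdW : d ∉ W)
    (hdc : d ∈ b → c ∈ b) : s (b ∩ insert d W).card ≤ s (b ∩ insert c W).card := by
  rw [card_inter_insert_of_notMem hdW, card_inter_insert_of_notMem hcW]
  refine hs (Nat.add_le_add_left ?_ _)
  split_ifs <;> simp_all

theorem score_inter_insert_lt (hs : StrictMono s) (hcW : c ∉ W) (hdW : d ∉ W)
    (hcb : c ∈ b) (hdb : d ∉ b) : s (b ∩ insert d W).card < s (b ∩ insert c W).card := by
  rw [card_inter_insert_of_notMem hdW, card_inter_insert_of_notMem hcW, if_pos hcb, if_neg hdb]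
  exact hs (Nat.lt_succ_self _)

theorem thieleScore_insert_lt_insert (hs : StrictMono s) {A : Multiset (Finset C)}
    (hcW : c ∉ W) (hdW : d ∉ W) (hsub : ∀ b ∈ A, d ∈ b → c ∈ b)
    (hproper : ∃ b ∈ A, c ∈ b ∧ d ∉ b) :
    thieleScore s A (insert d W) < thieleScore s A (insert c W) := by
  obtain ⟨b, hbA, hcb, hdb⟩ := hproper
  exact Multiset.sum_lt_sum
    (fun b hb => score_inter_insert_le_of_imp hs.monotone hcW hdW (hsub b hb))
    ⟨b, hbA, score_inter_insert_lt hs hcW hdW hcb hdb⟩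

end ThieleScore

theorem seqThiele_strict_support_maximal_general
    {C : Type*} [DecidableEq C]
    (s : ℕ → ℚ)
    (hstrict : ∀ x : ℕ, s x < s (x + 1))
    (A : Multiset (Finset C))
    (W : Finset C) (c d : C) (hcW : c ∉ W) (hdW : d ∉ W)
    (hsub : ∀ b ∈ A, d ∈ b → c ∈ b)
    (hproper : ∃ b ∈ A, c ∈ b ∧ d ∉ b) :
    thieleScore s A (insert d W) < thieleScore s A (insert c W) ∧
    (∀ L : List C, seqThieleValid s A ∅ L → c ∉ L.toFinset → d ∉ L.toFinset →
      ¬ (∀ x : C, x ∉ L.toFinset →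
          thieleScore s A (insert x L.toFinset) ≤ thieleScore s A (insert d L.toFinset))) := by
  have hs : StrictMono s := strictMono_nat_of_lt_succ hstrict
  refine ⟨thieleScore_insert_lt_insert hs hcW hdW hsub hproper, fun L _ hcL hdL hmax => ?_⟩
  exact (hmax c hcL).not_gt (thieleScore_insert_lt_insert hs hcL hdL hsub hproper)

/-- Sequential Thiele rules with strictly increasing scoring function only pick
support-maximal candidates on laminar profiles: if `∅ ≠ N_A(d) ⊊ N_A(c)` and
`c, d ∉ W`, then `ŝ(A, W ∪ {d}) < ŝ(A, W ∪ {c})`; in particular, given any valid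
sequence of the sequential Thiele rule with both `c` and `d` unchosen, `d` does not
maximize the score and is not selected next. -/
theorem seqThiele_strict_support_maximal
    {C : Type*} [DecidableEq C] [Fintype C]
    (s : ℕ → ℚ) (h0 : s 0 = 0) (h1 : 0 < s 1)
    (hstrict : ∀ x : ℕ, s x < s (x + 1))
    (hconcave : ∀ x : ℕ, s (x + 2) - s (x + 1) ≤ s (x + 1) - s x)
    (A : Multiset (Finset C)) (hA : validProfile A) (hlam : Laminar A)
    (W : Finset C) (c d : C) (hcW : c ∉ W) (hdW : d ∉ W)
    (hne : ∃ b ∈ A, d ∈ b)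
    (hsub : ∀ b ∈ A, d ∈ b → c ∈ b)
    (hproper : ∃ b ∈ A, c ∈ b ∧ d ∉ b) :
    thieleScore s A (insert d W) < thieleScore s A (insert c W) ∧
    (∀ L : List C, seqThieleValid s A ∅ L → c ∉ L.toFinset → d ∉ L.toFinset →
      ¬ (∀ x : C, x ∉ L.toFinset →
          thieleScore s A (insert x L.toFinset) ≤ thieleScore s A (insert d L.toFinset))) :=
  seqThiele_strict_support_maximal_general s hstrict A W c d hcW hdW hsub hproper
end
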